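/- arXiv:1902.07605 — 2 statements merged into one kernel-verified Lean document; each statement's English description precedes it below -/
import Mathlib

section
/- Let δ ∈ (0,1), let (Ω, F, μ) be a probability space, and let P*(ω) be a measurable random transition model with p*_{s,a}(ω) ∈ Δ^S for each state–action pair (s,a). Let p̄_{s,a} = E_μ[p*_{s,a}] and let ψ^B_{s,a} ≥ 0 satisfy μ[{ω : ‖p*_{s,a}(ω) − p̄_{s,a}‖₁ > ψ^B_{s,a}}] < δ/(SA) for each (s,a). Define the Bayesian credible ambiguity set P^B_{s,a} = {p ∈ Δ^S : ‖p − p̄_{s,a}‖₁ ≤ ψ^B_{s,a}}, and assume the event E = {ω : for every deterministic policy π, v̂_{P^B}^π ≤ v_{P*(ω)}^π componentwise} is measurable. Then μ[E] ≥ 1 − δ. (Theorem 3: safety of BCI ambiguity sets.) -/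
/-!
On the event that every true transition vector `P* s a` lies in its credible ball, the infimum
in the robust Bellman operator is at most the value at `P* s a`, so the robust value function
`vR` satisfies `vR ≤ T vR` for the true Bellman operator `T`. At a state where `vR − vT` is
maximal this gives `max (vR − vT) ≤ γ · max (vR − vT)`, so the maximum is nonpositive. A union
bound over the `S·A` balls, each missed with probability less than `δ/(SA)`, shows that the event
has probability at least `1 − δ`.
-/

open MeasureTheory

noncomputable section

/-- Inner product of two vectors in `ℝ^S`. -/
def dot {S : ℕ} (p v : Fin S → ℝ) : ℝ := ∑ j, p j * v j

/-- Bellman operator for a deterministic policy `π` under transition probabilities `P`. -/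
def Bellman {S A : ℕ} (r : Fin S → Fin A → ℝ) (γ : ℝ)
    (P : Fin S → Fin A → Fin S → ℝ) (π : Fin S → Fin A)
    (v : Fin S → ℝ) : Fin S → ℝ :=
  fun s => r s (π s) + γ * dot (P s (π s)) v

/-- Robust Bellman operator for a deterministic policy `π` under ambiguity set `Amb`. -/
def robustBellman {S A : ℕ} (r : Fin S → Fin A → ℝ) (γ : ℝ)
    (Amb : Fin S → Fin A → Set (Fin S → ℝ)) (π : Fin S → Fin A)
    (v : Fin S → ℝ) : Fin S → ℝ :=
  fun s => r s (π s) + γ * sInf ((fun p => dot p v) '' Amb s (π s))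

section Bellman

variable {S A : ℕ}

lemma dot_sub (p v w : Fin S → ℝ) : dot p v - dot p w = dot p (v - w) := by
  simp only [dot, ← Finset.sum_sub_distrib, Pi.sub_apply, mul_sub]

lemma dot_le_of_mem_stdSimplex {p v : Fin S → ℝ} {c : ℝ} (hp : p ∈ stdSimplex ℝ (Fin S))
    (hv : ∀ j, v j ≤ c) : dot p v ≤ c :=
  calc dot p v ≤ ∑ j, p j * c :=
        Finset.sum_le_sum fun j _ => mul_le_mul_of_nonneg_left (hv j) (hp.1 j)
    _ = c := by rw [← Finset.sum_mul, hp.2, one_mul]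

lemma bddBelow_image_dot {K : Set (Fin S → ℝ)} (hK : K ⊆ stdSimplex ℝ (Fin S)) (v : Fin S → ℝ) :
    BddBelow ((fun p => dot p v) '' K) :=
  ((isCompact_stdSimplex ℝ (Fin S)).bddBelow_image
    (by unfold dot; fun_prop : Continuous fun p : Fin S → ℝ => dot p v).continuousOn).mono
    (Set.image_mono hK)

lemma robustBellman_le_bellman {r : Fin S → Fin A → ℝ} {γ : ℝ} (hγ : 0 ≤ γ)
    {Amb : Fin S → Fin A → Set (Fin S → ℝ)} (hAmb : ∀ s a, Amb s a ⊆ stdSimplex ℝ (Fin S))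
    {P : Fin S → Fin A → Fin S → ℝ} (hP : ∀ s a, P s a ∈ Amb s a) (π : Fin S → Fin A)
    (v : Fin S → ℝ) (s : Fin S) : robustBellman r γ Amb π v s ≤ Bellman r γ P π v s := by
  have hinf : sInf ((fun p => dot p v) '' Amb s (π s)) ≤ dot (P s (π s)) v :=
    csInf_le (bddBelow_image_dot (hAmb s (π s)) v) ⟨_, hP s (π s), rfl⟩
  simp only [robustBellman, Bellman]
  gcongr

lemma nonpos_of_le_mul_dot {Q : Fin S → Fin S → ℝ} (hQ : ∀ s, Q s ∈ stdSimplex ℝ (Fin S))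
    {γ : ℝ} (hγ0 : 0 ≤ γ) (hγ1 : γ < 1) {d : Fin S → ℝ} (hd : ∀ s, d s ≤ γ * dot (Q s) d)
    (s : Fin S) : d s ≤ 0 := by
  have : Nonempty (Fin S) := ⟨s⟩
  obtain ⟨s₀, hs₀⟩ := Finite.exists_max d
  have hmax : d s₀ ≤ γ * d s₀ :=
    (hd s₀).trans (mul_le_mul_of_nonneg_left (dot_le_of_mem_stdSimplex (hQ s₀) hs₀) hγ0)
  nlinarith [hs₀ s]

lemma le_of_le_bellman_of_eq_bellman {r : Fin S → Fin A → ℝ} {γ : ℝ}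
    (hγ0 : 0 ≤ γ) (hγ1 : γ < 1)
    {P : Fin S → Fin A → Fin S → ℝ} (hP : ∀ s a, P s a ∈ stdSimplex ℝ (Fin S))
    {π : Fin S → Fin A} {u w : Fin S → ℝ} (hu : ∀ s, u s ≤ Bellman r γ P π u s)
    (hw : w = Bellman r γ P π w) (s : Fin S) : u s ≤ w s := by
  have hdiff : ∀ s, (u - w) s ≤ γ * dot (P s (π s)) (u - w) := fun s => by
    have hus := hu s
    have hws : w s = Bellman r γ P π w s := congrFun hw s
    simp only [Bellman] at hus hws
    rw [Pi.sub_apply, ← dot_sub, mul_sub]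
    linarith
  exact sub_nonpos.1 (nonpos_of_le_mul_dot (fun s => hP s (π s)) hγ0 hγ1 hdiff s)

end Bellman

lemma natCast_mul_ofReal_div_le (n : ℕ) {δ : ℝ} (hδ : 0 ≤ δ) :
    (n : ENNReal) * ENNReal.ofReal (δ / n) ≤ ENNReal.ofReal δ := by
  rw [← ENNReal.ofReal_natCast, ← ENNReal.ofReal_mul n.cast_nonneg]
  refine ENNReal.ofReal_le_ofReal ?_
  rcases n.eq_zero_or_pos with rfl | hn
  · simpa using hδ
  · rw [mul_div_cancel₀ δ (by positivity)]

lemma ofReal_one_sub_le_measure_forall {Ω ι : Type*} [MeasurableSpace Ω] [Fintype ι]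
    (μ : Measure Ω) [IsProbabilityMeasure μ] (p : ι → Ω → Prop) {δ : ℝ} (hδ : 0 ≤ δ)
    (hp : ∀ i, μ {ω | ¬ p i ω} ≤ ENNReal.ofReal (δ / Fintype.card ι)) :
    ENNReal.ofReal (1 - δ) ≤ μ {ω | ∀ i, p i ω} := by
  have hbad : μ (⋃ i, {ω | ¬ p i ω}) ≤ ENNReal.ofReal δ :=
    calc μ (⋃ i, {ω | ¬ p i ω}) ≤ ∑ i, μ {ω | ¬ p i ω} := measure_iUnion_fintype_le μ _
      _ ≤ ∑ _i : ι, ENNReal.ofReal (δ / Fintype.card ι) := Finset.sum_le_sum fun i _ => hp i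
      _ ≤ ENNReal.ofReal δ := by
        simpa only [Finset.sum_const, Finset.card_univ, nsmul_eq_mul]
          using natCast_mul_ofReal_div_le (Fintype.card ι) hδ
  have hcompl : {ω | ∀ i, p i ω}ᶜ = ⋃ i, {ω | ¬ p i ω} := by ext; simp
  have hone : 1 ≤ μ {ω | ∀ i, p i ω} + ENNReal.ofReal δ :=
    calc 1 = μ Set.univ := measure_univ.symm
      _ ≤ μ {ω | ∀ i, p i ω} + μ {ω | ∀ i, p i ω}ᶜ := measure_univ_le_add_compl _
      _ ≤ μ {ω | ∀ i, p i ω} + ENNReal.ofReal δ := by rw [hcompl]; gcongr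
  rw [ENNReal.ofReal_sub 1 hδ, ENNReal.ofReal_one]
  exact tsub_le_iff_right.2 hone

theorem bci_safety_general
    {S A : ℕ}
    (r : Fin S → Fin A → ℝ) (γ : ℝ) (hγ0 : 0 ≤ γ) (hγ1 : γ < 1)
    (δ : ℝ) (hδ0 : 0 < δ)
    {Ω : Type*} [MeasurableSpace Ω] (μ : Measure Ω) [IsProbabilityMeasure μ]
    -- the random true transition model
    (Pstar : Ω → Fin S → Fin A → Fin S → ℝ)
    (hPstarSimplex : ∀ ω s a, Pstar ω s a ∈ stdSimplex ℝ (Fin S))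
    -- the posterior mean transition probabilities
    (pbar : Fin S → Fin A → Fin S → ℝ)
    -- the credible-region radii
    (ψB : Fin S → Fin A → ℝ)
    (hψBcred : ∀ s a,
      μ {ω | ψB s a < ∑ j, |Pstar ω s a j - pbar s a j|} < ENNReal.ofReal (δ / (S * A)))
    -- the BCI ambiguity set
    (AmbB : Fin S → Fin A → Set (Fin S → ℝ))
    (hAmbB : ∀ s a, AmbB s a =
      {p ∈ stdSimplex ℝ (Fin S) | ∑ j, |p j - pbar s a j| ≤ ψB s a})
    -- robust value function of each policy under the BCI ambiguity set
    (vR : (Fin S → Fin A) → Fin S → ℝ)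
    (hvR : ∀ π, vR π = robustBellman r γ AmbB π (vR π))
    -- true value function of each policy under the realized true model
    (vT : Ω → (Fin S → Fin A) → Fin S → ℝ)
    (hvT : ∀ ω π, vT ω π = Bellman r γ (Pstar ω) π (vT ω π)) :
    ENNReal.ofReal (1 - δ) ≤ μ {ω | ∀ π : Fin S → Fin A, ∀ s, vR π s ≤ vT ω π s} := by
  have hAmbB_subset : ∀ s a, AmbB s a ⊆ stdSimplex ℝ (Fin S) := fun s a =>
    hAmbB s a ▸ Set.sep_subset _ _
  have hsafe : {ω | ∀ sa : Fin S × Fin A, Pstar ω sa.1 sa.2 ∈ AmbB sa.1 sa.2} ⊆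
      {ω | ∀ π : Fin S → Fin A, ∀ s, vR π s ≤ vT ω π s} := fun ω hω π =>
    le_of_le_bellman_of_eq_bellman hγ0 hγ1 (hPstarSimplex ω)
      (fun s => (congrFun (hvR π) s).trans_le <|
        robustBellman_le_bellman hγ0 hAmbB_subset (fun s a => hω (s, a)) π (vR π) s)
      (hvT ω π)
  refine (ofReal_one_sub_le_measure_forall μ _ hδ0.le fun sa => ?_).trans (measure_mono hsafe)
  calc μ {ω | Pstar ω sa.1 sa.2 ∉ AmbB sa.1 sa.2}
      ≤ μ {ω | ψB sa.1 sa.2 < ∑ j, |Pstar ω sa.1 sa.2 j - pbar sa.1 sa.2 j|} :=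
        measure_mono fun ω hω => by
          rw [hAmbB] at hω
          simpa [hPstarSimplex ω] using hω
    _ ≤ ENNReal.ofReal (δ / Fintype.card (Fin S × Fin A)) := by
        simpa only [Fintype.card_prod, Fintype.card_fin, Nat.cast_mul] using (hψBcred _ _).le

/-- Theorem 3: safety of the Bayesian credible region (BCI) ambiguity sets.  If each `L1` ball
`AmbB s a` of radius `ψB s a` around the posterior mean `pbar s a` misses the random true
transition probability with probability less than `δ/(SA)`, then with probability at least
`1 − δ` the robust value function lower-bounds the true value function simultaneously for all
deterministic policies. -/
theorem bci_safety
    {S A : ℕ} (hS : 0 < S) (hA : 0 < A)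
    (r : Fin S → Fin A → ℝ) (γ : ℝ) (hγ0 : 0 ≤ γ) (hγ1 : γ < 1)
    (δ : ℝ) (hδ0 : 0 < δ) (hδ1 : δ < 1)
    {Ω : Type*} [MeasurableSpace Ω] (μ : Measure Ω) [IsProbabilityMeasure μ]
    -- the random true transition model
    (Pstar : Ω → Fin S → Fin A → Fin S → ℝ)
    (hPstarMeas : ∀ s a, Measurable fun ω => Pstar ω s a)
    (hPstarSimplex : ∀ ω s a, Pstar ω s a ∈ stdSimplex ℝ (Fin S))
    -- the posterior mean transition probabilities
    (pbar : Fin S → Fin A → Fin S → ℝ)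
    (hpbar : ∀ s a j, pbar s a j = ∫ ω, Pstar ω s a j ∂μ)
    -- the credible-region radii
    (ψB : Fin S → Fin A → ℝ) (hψB : ∀ s a, 0 ≤ ψB s a)
    (hψBcred : ∀ s a,
      μ {ω | ψB s a < ∑ j, |Pstar ω s a j - pbar s a j|} < ENNReal.ofReal (δ / (S * A)))
    -- the BCI ambiguity set
    (AmbB : Fin S → Fin A → Set (Fin S → ℝ))
    (hAmbB : ∀ s a, AmbB s a =
      {p ∈ stdSimplex ℝ (Fin S) | ∑ j, |p j - pbar s a j| ≤ ψB s a})
    -- robust value function of each policy under the BCI ambiguity set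
    (vR : (Fin S → Fin A) → Fin S → ℝ)
    (hvR : ∀ π, vR π = robustBellman r γ AmbB π (vR π))
    -- true value function of each policy under the realized true model
    (vT : Ω → (Fin S → Fin A) → Fin S → ℝ)
    (hvT : ∀ ω π, vT ω π = Bellman r γ (Pstar ω) π (vT ω π))
    -- the simultaneous safety event is measurable
    (hEMeas : MeasurableSet {ω | ∀ π : Fin S → Fin A, ∀ s, vR π s ≤ vT ω π s}) :
    ENNReal.ofReal (1 - δ) ≤ μ {ω | ∀ π : Fin S → Fin A, ∀ s, vR π s ≤ vT ω π s} :=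
  bci_safety_general r γ hγ0 hγ1 δ hδ0 μ Pstar hPstarSimplex pbar ψB hψBcred AmbB hAmbB vR hvR vT
    hvT
end
end

section
/- Let S ≥ 2, let p* ∈ Δ^S, let p̄ be the empirical distribution of n ≥ 1 i.i.d. samples from p*, and let ψ > 0. Then with probability at least 1 − S·exp(−ψ² n / 2), the true distribution p* satisfies simultaneously all S+1 linear constraints of the monotone ambiguity set around p̄: for every k ∈ {1,…,S+1}, ∑_{j ≥ k} (p*_j − p̄_j) − ∑_{j < k} (p*_j − p̄_j) ≤ ψ. (The concentration content of Lemma B.6 for the monotone ambiguity set, which avoids the 2^S factor.) -/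
open MeasureTheory

noncomputable section

/-- Empirical distribution of `n` samples `X i` with values in `{1,…,S}`. -/
def empiricalDist {Ω : Type*} {S n : ℕ} (X : Fin n → Ω → Fin S) (ω : Ω) : Fin S → ℝ :=
  fun j => (Finset.univ.filter fun i => X i ω = j).card / n

/-!
Since `p*` and `p̄` both sum to one, the `k`-th constraint reads `2 (q_k - q̄_k) ≤ ψ`, where
`q_k = ∑_{j ≥ k} p*_j` and `q̄_k` is the fraction of the samples that are `≥ k`. So it can only
fail if the `n` independent `[0,1]`-valued indicators `1[X_i ≥ k]`, of mean `q_k`, fall short of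
their mean by `nψ/2` in total, which by Hoeffding's inequality has probability at most
`exp(-ψ²n/2)`. The first constraint (`k = 0` with Lean's zero-based indices) always holds, and a
union bound over the remaining `S` constraints gives the claim.
-/

open ProbabilityTheory Finset Real

section Concentration

variable {Ω ι : Type*} [MeasurableSpace Ω] {μ : Measure Ω} [IsProbabilityMeasure μ] [Fintype ι]

theorem measureReal_sum_integral_sub_ge_le_of_mem_Icc {X : ι → Ω → ℝ} (h_indep : iIndepFun X μ)
    (hm : ∀ i, AEMeasurable (X i) μ) {a b : ℝ} (hb : ∀ i, ∀ᵐ ω ∂μ, X i ω ∈ Set.Icc a b)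
    {ε : ℝ} (hε : 0 ≤ ε) :
    μ.real {ω | ε ≤ ∑ i, (μ[X i] - X i ω)} ≤
      exp (-2 * ε ^ 2 / (Fintype.card ι * (b - a) ^ 2)) := by
  have h_subG : ∀ i ∈ (univ : Finset ι),
      HasSubgaussianMGF (fun ω ↦ μ[X i] - X i ω) ((‖-a - -b‖₊ / 2) ^ 2) μ := by
    intro i _
    have hneg : ∀ᵐ ω ∂μ, (-X i) ω ∈ Set.Icc (-b) (-a) := by
      filter_upwards [hb i] with ω hω using ⟨neg_le_neg hω.2, neg_le_neg hω.1⟩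
    convert hasSubgaussianMGF_of_mem_Icc (hm i).neg hneg using 2 with ω
    simp [integral_neg]
    ring
  have h_indep' : iIndepFun (fun i ω ↦ μ[X i] - X i ω) μ :=
    (h_indep.comp (fun i (x : ℝ) ↦ μ[X i] - x) fun _ ↦ by fun_prop :)
  refine (HasSubgaussianMGF.measure_sum_ge_le_of_iIndepFun h_indep' h_subG hε).trans_eq ?_
  congr 1
  simp only [sum_const, card_univ, nsmul_eq_mul]
  push_cast
  rw [div_pow, Real.norm_eq_abs, sq_abs, neg_sub_neg]
  generalize (b - a) ^ 2 = d
  ring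

theorem measureReal_sum_measureReal_preimage_sub_indicator_ge_le {α : Type*} [MeasurableSpace α]
    {X : ι → Ω → α} (h_indep : iIndepFun X μ) (hm : ∀ i, Measurable (X i)) {A : Set α}
    (hA : MeasurableSet A) {ε : ℝ} (hε : 0 ≤ ε) :
    μ.real {ω | ε ≤ ∑ i, (μ.real (X i ⁻¹' A) - (X i ⁻¹' A).indicator 1 ω)} ≤
      exp (-2 * ε ^ 2 / Fintype.card ι) := by
  have h_indep' : iIndepFun (fun i ↦ (X i ⁻¹' A).indicator (1 : Ω → ℝ)) μ :=
    h_indep.comp (fun _ ↦ A.indicator 1) fun _ ↦ measurable_one.indicator hA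
  have hb : ∀ i, ∀ᵐ ω ∂μ, (X i ⁻¹' A).indicator (1 : Ω → ℝ) ω ∈ Set.Icc 0 1 := fun i ↦
    ae_of_all _ fun ω ↦ by by_cases hω : ω ∈ X i ⁻¹' A <;> simp [hω]
  have h := measureReal_sum_integral_sub_ge_le_of_mem_Icc h_indep'
    (fun i ↦ (measurable_one.indicator (hm i hA)).aemeasurable) hb hε
  simpa [integral_indicator_one (hm _ hA)] using h

theorem ofReal_one_sub_sum_le_measure_iInter {s : ι → Set Ω} {c : ι → ℝ} (hc : ∀ i, 0 ≤ c i)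
    (h : ∀ i, μ (s i)ᶜ ≤ ENNReal.ofReal (c i)) :
    ENNReal.ofReal (1 - ∑ i, c i) ≤ μ (⋂ i, s i) := by
  have h_union : μ (⋂ i, s i)ᶜ ≤ ENNReal.ofReal (∑ i, c i) := by
    rw [Set.compl_iInter, ENNReal.ofReal_sum_of_nonneg fun i _ ↦ hc i]
    exact (measure_iUnion_fintype_le μ _).trans (sum_le_sum fun i _ ↦ h i)
  rw [ENNReal.ofReal_sub _ (sum_nonneg fun i _ ↦ hc i), ENNReal.ofReal_one, tsub_le_iff_right]
  calc 1 = μ ((⋂ i, s i) ∪ (⋂ i, s i)ᶜ) := by rw [Set.union_compl_self, measure_univ]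
    _ ≤ μ (⋂ i, s i) + μ (⋂ i, s i)ᶜ := measure_union_le _ _
    _ ≤ μ (⋂ i, s i) + ENNReal.ofReal (∑ i, c i) := by gcongr

end Concentration

/-- The left-hand side of the `k`-th constraint of the monotone ambiguity set around `q`. -/
def monotoneGap {S : ℕ} (p q : Fin S → ℝ) (k : ℕ) : ℝ :=
  ∑ j ∈ univ.filter (fun j : Fin S ↦ k ≤ (j : ℕ)), (p j - q j) -
    ∑ j ∈ univ.filter (fun j : Fin S ↦ (j : ℕ) < k), (p j - q j)

theorem monotoneGap_eq_two_mul {S : ℕ} {p q : Fin S → ℝ} (hp : ∑ j, p j = 1)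
    (hq : ∑ j, q j = 1) (k : ℕ) :
    monotoneGap p q k = 2 * ∑ j ∈ univ.filter (fun j : Fin S ↦ k ≤ (j : ℕ)), (p j - q j) := by
  have htot : ∑ j ∈ univ.filter (fun j : Fin S ↦ k ≤ (j : ℕ)), (p j - q j) +
      ∑ j ∈ univ.filter (fun j : Fin S ↦ (j : ℕ) < k), (p j - q j) = 0 := by
    simp_rw [← not_le]
    rw [sum_filter_add_sum_filter_not, sum_sub_distrib, hp, hq, sub_self]
  rw [monotoneGap]
  linarith

section Empirical

variable {Ω : Type*} {S n : ℕ}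

theorem sum_empiricalDist (X : Fin n → Ω → Fin S) (ω : Ω) (A : Finset (Fin S)) :
    ∑ j ∈ A, empiricalDist X ω j = #{i | X i ω ∈ A} / n := by
  simp only [empiricalDist, ← sum_div, ← Nat.cast_sum, sum_card_fiberwise_eq_card_filter]

theorem sum_empiricalDist_univ (hn : n ≠ 0) (X : Fin n → Ω → Fin S) (ω : Ω) :
    ∑ j, empiricalDist X ω j = 1 := by
  simp [sum_empiricalDist, hn]

end Empirical

theorem measure_monotoneGap_empiricalDist_gt_le {Ω : Type*} [MeasurableSpace Ω] {μ : Measure Ω}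
    [IsProbabilityMeasure μ] {S n : ℕ} {p : Fin S → ℝ} (hp : p ∈ stdSimplex ℝ (Fin S))
    (hn : n ≠ 0) {X : Fin n → Ω → Fin S} (hXmeas : ∀ i, Measurable (X i))
    (hXindep : iIndepFun X μ) (hXlaw : ∀ i j, μ {ω | X i ω = j} = ENNReal.ofReal (p j))
    {ψ : ℝ} (hψ : 0 ≤ ψ) (k : ℕ) :
    μ {ω | ψ < monotoneGap p (empiricalDist X ω) k} ≤ ENNReal.ofReal (exp (-ψ ^ 2 * n / 2)) := by
  set A := univ.filter fun j : Fin S ↦ k ≤ (j : ℕ)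
  have hmean : ∀ i, μ.real (X i ⁻¹' A) = ∑ j ∈ A, p j := fun i ↦ by
    rw [← sum_measureReal_preimage_singleton A fun j _ ↦ hXmeas i (measurableSet_singleton j)]
    refine sum_congr rfl fun j _ ↦ ?_
    simp [measureReal_def, Set.preimage, hXlaw, hp.1 j]
  have hcount : ∀ ω, ∑ i, (X i ⁻¹' A).indicator (1 : Ω → ℝ) ω = #{i | X i ω ∈ A} := by
    intro ω
    rw [natCast_card_filter]
    exact sum_congr rfl fun i _ ↦ by by_cases h : X i ω ∈ A <;> simp [h]
  have hn' : (0 : ℝ) < n := by positivity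
  have hsub : {ω | ψ < monotoneGap p (empiricalDist X ω) k} ⊆
      {ω | n * ψ / 2 ≤ ∑ i, (μ.real (X i ⁻¹' A) - (X i ⁻¹' A).indicator 1 ω)} := by
    intro ω hω
    rw [Set.mem_ofPred_eq, monotoneGap_eq_two_mul hp.2 (sum_empiricalDist_univ hn X ω),
      sum_sub_distrib, sum_empiricalDist] at hω
    simp only [Set.mem_ofPred_eq, sum_sub_distrib, hmean, hcount, sum_const, card_univ,
      Fintype.card_fin, nsmul_eq_mul]
    have hcancel : (n : ℝ) * (#{i | X i ω ∈ A} / n) = #{i | X i ω ∈ A} :=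
      mul_div_cancel₀ _ hn'.ne'
    linarith [mul_lt_mul_of_pos_left hω hn']
  calc μ {ω | ψ < monotoneGap p (empiricalDist X ω) k}
      ≤ μ {ω | n * ψ / 2 ≤ ∑ i, (μ.real (X i ⁻¹' A) - (X i ⁻¹' A).indicator 1 ω)} :=
        measure_mono hsub
    _ ≤ ENNReal.ofReal (exp (-2 * (n * ψ / 2) ^ 2 / n)) := by
        rw [← ofReal_measureReal]
        refine ENNReal.ofReal_le_ofReal ?_
        simpa using measureReal_sum_measureReal_preimage_sub_indicator_ge_le hXindep hXmeas
          A.measurableSet (by positivity)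
    _ = ENNReal.ofReal (exp (-ψ ^ 2 * n / 2)) := by
        congr 2
        field_simp

theorem monotone_ambiguity_concentration_general
    {S : ℕ}
    (pstar : Fin S → ℝ) (hpstar : pstar ∈ stdSimplex ℝ (Fin S))
    (n : ℕ) (hn : 1 ≤ n)
    {Ω : Type*} [MeasurableSpace Ω] (μ : Measure Ω) [IsProbabilityMeasure μ]
    (X : Fin n → Ω → Fin S) (hXmeas : ∀ i, Measurable (X i))
    (hXindep : ProbabilityTheory.iIndepFun X μ)
    (hXlaw : ∀ i j, μ {ω | X i ω = j} = ENNReal.ofReal (pstar j))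
    (ψ : ℝ) (hψ : 0 < ψ) :
    ENNReal.ofReal (1 - S * Real.exp (-ψ ^ 2 * n / 2)) ≤
      μ {ω | ∀ k : Fin (S + 1),
        (∑ j ∈ Finset.univ.filter (fun j : Fin S => (k : ℕ) ≤ (j : ℕ)),
          (pstar j - empiricalDist X ω j)) -
        (∑ j ∈ Finset.univ.filter (fun j : Fin S => (j : ℕ) < (k : ℕ)),
          (pstar j - empiricalDist X ω j)) ≤ ψ} := by
  have hn0 : n ≠ 0 := Nat.one_le_iff_ne_zero.mp hn
  set c : Fin (S + 1) → ℝ := Fin.cons 0 fun _ ↦ exp (-ψ ^ 2 * n / 2)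
  have hc : ∀ k, 0 ≤ c k := Fin.cases le_rfl fun _ ↦ (exp_pos _).le
  have hsum : ∑ k, c k = S * exp (-ψ ^ 2 * n / 2) := by simp [c, Fin.sum_cons]
  rw [← hsum, Set.ofPred_forall]
  refine ofReal_one_sub_sum_le_measure_iInter
    (s := fun k : Fin (S + 1) ↦ {ω | monotoneGap pstar (empiricalDist X ω) k ≤ ψ}) hc fun k ↦ ?_
  simp only [Set.compl_ofPred, not_le]
  induction k using Fin.cases with
  | zero =>
    have hgap : ∀ ω, monotoneGap pstar (empiricalDist X ω) 0 = 0 := fun ω ↦ by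
      simp [monotoneGap_eq_two_mul hpstar.2 (sum_empiricalDist_univ hn0 X ω), hpstar.2,
        sum_empiricalDist_univ hn0 X ω]
    simp [hgap, hψ.not_gt]
  | succ k =>
    simpa [c] using measure_monotoneGap_empiricalDist_gt_le hpstar hn0 hXmeas hXindep hXlaw
      hψ.le (k + 1)

/-- Concentration content of Lemma B.6: with probability at least `1 − S·exp(−ψ²n/2)`, the
true distribution `p*` satisfies all `S+1` linear constraints of the monotone ambiguity set
around the empirical distribution:
`∑_{j ≥ k} (p*_j − p̄_j) − ∑_{j < k} (p*_j − p̄_j) ≤ ψ` for every `k = 1,…,S+1`. -/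
theorem monotone_ambiguity_concentration
    {S : ℕ} (hS : 2 ≤ S)
    (pstar : Fin S → ℝ) (hpstar : pstar ∈ stdSimplex ℝ (Fin S))
    (n : ℕ) (hn : 1 ≤ n)
    {Ω : Type*} [MeasurableSpace Ω] (μ : Measure Ω) [IsProbabilityMeasure μ]
    (X : Fin n → Ω → Fin S) (hXmeas : ∀ i, Measurable (X i))
    (hXindep : ProbabilityTheory.iIndepFun X μ)
    (hXlaw : ∀ i j, μ {ω | X i ω = j} = ENNReal.ofReal (pstar j))
    (ψ : ℝ) (hψ : 0 < ψ) :
    ENNReal.ofReal (1 - S * Real.exp (-ψ ^ 2 * n / 2)) ≤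
      μ {ω | ∀ k : Fin (S + 1),
        (∑ j ∈ Finset.univ.filter (fun j : Fin S => (k : ℕ) ≤ (j : ℕ)),
          (pstar j - empiricalDist X ω j)) -
        (∑ j ∈ Finset.univ.filter (fun j : Fin S => (j : ℕ) < (k : ℕ)),
          (pstar j - empiricalDist X ω j)) ≤ ψ} :=
  monotone_ambiguity_concentration_general pstar hpstar n hn μ X hXmeas hXindep hXlaw ψ hψ
end
end
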